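/- If a sequent Γ ⇒ Δ is provable in Grz∞, then for any finite set of formulas Λ, the sequent Λ*, Γ ⇒ Δ is provable in the finitary calculus Grz_Seq, where Λ* = {□(A → □A) : A ∈ Λ}. In particular (taking Λ = ∅), provability in Grz∞ implies provability in Grz_Seq. -/

import Mathlib

/-- Modal formulas of the Grzegorczyk logic: ⊥, atoms, →, □. -/
inductive Formula : Type
  | bot : Formula
  | atom : ℕ → Formula
  | imp : Formula → Formula → Formula
  | box : Formula → Formula
deriving DecidableEq

/-- A sequent Γ ⇒ Δ is a pair of finite multisets of formulas. -/
abbrev Sequent : Type := Multiset Formula × Multiset Formula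

/-- Names of the inference rules of Grz∞ + cut (including the two kinds of initial sequents). -/
inductive Rule : Type
  | ax | axBot | impL | impR | refl | box | cut
deriving DecidableEq

/-- □Π for a multiset Π. -/
def boxed (P : Multiset Formula) : Multiset Formula := P.map Formula.box

/-- `Inst r s p₁ p₂` : the rule `r` has a (correct) instance with conclusion `s`,
first premise `p₁` and second premise `p₂` (`none` = no such premise). -/
inductive Inst : Rule → Sequent → Option Sequent → Option Sequent → Prop
  | ax (Γ Δ : Multiset Formula) (p : ℕ) :
      Inst .ax (Formula.atom p ::ₘ Γ, Formula.atom p ::ₘ Δ) none none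
  | axBot (Γ Δ : Multiset Formula) :
      Inst .axBot (Formula.bot ::ₘ Γ, Δ) none none
  | impL (Γ Δ : Multiset Formula) (A B : Formula) :
      Inst .impL (Formula.imp A B ::ₘ Γ, Δ) (some (B ::ₘ Γ, Δ)) (some (Γ, A ::ₘ Δ))
  | impR (Γ Δ : Multiset Formula) (A B : Formula) :
      Inst .impR (Γ, Formula.imp A B ::ₘ Δ) (some (A ::ₘ Γ, B ::ₘ Δ)) none
  | refl (Γ Δ : Multiset Formula) (A : Formula) :
      Inst .refl (Formula.box A ::ₘ Γ, Δ) (some (A ::ₘ Formula.box A ::ₘ Γ, Δ)) none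
  | box (Γ Δ : Multiset Formula) (A : Formula) (P : Multiset Formula) :
      Inst .box (Γ + boxed P, Formula.box A ::ₘ Δ) (some (Γ + boxed P, A ::ₘ Δ))
        (some (boxed P, {A}))
  | cut (Γ Δ : Multiset Formula) (A : Formula) :
      Inst .cut (Γ, Δ) (some (Γ, A ::ₘ Δ)) (some (A ::ₘ Γ, Δ))

/-- A labelling of tree addresses (lists of booleans; `true` = second/right child)
by a rule name together with a sequent; `none` means the address is outside the tree. -/
abbrev Lab : Type := List Bool → Option (Rule × Sequent)

/-- The labelling of the subtree at child `i`. -/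
def shift (i : Bool) (l : Lab) : Lab := fun a => l (i :: a)

/-- An ∞-proof in Grz∞ + cut: a possibly infinite tree of sequents built according to
the rules, in which every infinite branch passes through the right premise of the
rule (□) infinitely many times. -/
structure InfProof : Type where
  lab : Lab
  root_some : (lab []).isSome
  nojunk : ∀ (a : List Bool) (i : Bool), lab a = none → lab (a ++ [i]) = none
  step : ∀ (a : List Bool) (r : Rule) (s : Sequent), lab a = some (r, s) →
      Inst r s ((lab (a ++ [false])).map Prod.snd) ((lab (a ++ [true])).map Prod.snd)
  branch : ∀ f : ℕ → Bool, (∀ n : ℕ, (lab ((List.range n).map f)).isSome) →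
      ∀ N : ℕ, ∃ n : ℕ, N ≤ n ∧ f n = true ∧
        (lab ((List.range n).map f)).map Prod.fst = some Rule.box

/-- The sequent at the root of an ∞-proof. -/
def rootSeq (π : InfProof) : Sequent := ((π.lab []).map Prod.snd).getD (0, 0)

/-- `Proves π S` : the ∞-proof `π` is an ∞-proof of the sequent `S`. -/
def Proves (π : InfProof) (S : Sequent) : Prop := ∃ r : Rule, π.lab [] = some (r, S)

/-- An ∞-proof contains no application of the cut rule (i.e. it is a proof of Grz∞). -/
def NoCut (π : InfProof) : Prop := ∀ (a : List Bool) (r : Rule) (s : Sequent),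
  π.lab a = some (r, s) → r ≠ Rule.cut

/-- Membership of an address in the main fragment: no proper passage through a
right premise of (□) strictly below it. -/
def InMain (l : Lab) (a : List Bool) : Prop :=
  (l a).isSome ∧ ∀ (b c : List Bool), a = b ++ true :: c →
    (l b).map Prod.fst = some Rule.box → c = []

/-- The local height |π| : the length of the longest branch in the main fragment. -/
noncomputable def height (l : Lab) : ℕ := sSup {n : ℕ | ∃ a : List Bool, InMain l a ∧ a.length = n}

/-- The relations ∼ₙ on ∞-proofs (presented on labellings), defined inductively:
π ∼₀ τ always; a single-node proof is ∼ₙ-related to itself; proofs ending in the same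
instance of (→L), (cut), (→R), (refl) are ∼ₙ-related when their immediate subproofs are;
proofs ending in the same instance of (□) are ∼ₙ₊₁-related when the left-premise subproofs
are ∼ₙ₊₁-related and the right-premise subproofs are ∼ₙ-related. -/
inductive Sim : ℕ → Lab → Lab → Prop
  | zero (l m : Lab) : Sim 0 l m
  | leaf (n : ℕ) (l : Lab) : height l = 0 → Sim n l l
  | bin (n : ℕ) (l m : Lab) (r : Rule) (s : Sequent) :
      (r = Rule.impL ∨ r = Rule.cut) →
      l [] = some (r, s) → m [] = some (r, s) →
      (l [false]).map Prod.snd = (m [false]).map Prod.snd →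
      (l [true]).map Prod.snd = (m [true]).map Prod.snd →
      Sim n (shift false l) (shift false m) → Sim n (shift true l) (shift true m) →
      Sim n l m
  | un (n : ℕ) (l m : Lab) (r : Rule) (s : Sequent) :
      (r = Rule.impR ∨ r = Rule.refl) →
      l [] = some (r, s) → m [] = some (r, s) →
      (l [false]).map Prod.snd = (m [false]).map Prod.snd →
      Sim n (shift false l) (shift false m) →
      Sim n l m
  | box (n : ℕ) (l m : Lab) (s : Sequent) :
      l [] = some (Rule.box, s) → m [] = some (Rule.box, s) →
      (l [false]).map Prod.snd = (m [false]).map Prod.snd →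
      (l [true]).map Prod.snd = (m [true]).map Prod.snd →
      Sim (n + 1) (shift false l) (shift false m) → Sim n (shift true l) (shift true m) →
      Sim (n + 1) l m

/-- The sets 𝒫ₙ of ∞-proofs (presented on labellings), defined inductively:
𝒫₀ is everything; single-node proofs are in every 𝒫ₙ; (→L), (→R), (refl) preserve
membership in 𝒫ₙ; a proof ending in (□) with left-premise subproof in 𝒫ₙ₊₁ and
right-premise subproof in 𝒫ₙ is in 𝒫ₙ₊₁. -/
inductive MemP : ℕ → Lab → Prop
  | zero (l : Lab) : MemP 0 l
  | leaf (n : ℕ) (l : Lab) : height l = 0 → MemP n l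
  | bin (n : ℕ) (l : Lab) (s : Sequent) :
      l [] = some (Rule.impL, s) →
      MemP n (shift false l) → MemP n (shift true l) → MemP n l
  | un (n : ℕ) (l : Lab) (r : Rule) (s : Sequent) :
      (r = Rule.impR ∨ r = Rule.refl) →
      l [] = some (r, s) → MemP n (shift false l) → MemP n l
  | box (n : ℕ) (l : Lab) (s : Sequent) :
      l [] = some (Rule.box, s) →
      MemP (n + 1) (shift false l) → MemP n (shift true l) → MemP (n + 1) l

/- The metric d(π,τ) = 2^(−sup{n : π ∼ₙ τ}), with 2^(−∞) = 0. -/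
open Classical in
noncomputable def pdist (π τ : InfProof) : ℝ :=
  if ∀ n : ℕ, Sim n π.lab τ.lab then 0
  else (2 : ℝ) ^ (-((sSup {n : ℕ | Sim n π.lab τ.lab} : ℕ) : ℤ))

/-- A mapping on ∞-proofs is nonexpansive if it preserves all relations ∼ₙ. -/
def Nonexpansive (f : InfProof → InfProof) : Prop :=
  ∀ (n : ℕ) (π τ : InfProof), Sim n π.lab τ.lab → Sim n (f π).lab (f τ).lab

/-- A mapping is adequate if it is nonexpansive, maps 𝒫₁ into 𝒫₁,
and does not increase local height. -/
def Adequate (f : InfProof → InfProof) : Prop :=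
  Nonexpansive f ∧ (∀ π : InfProof, MemP 1 π.lab → MemP 1 (f π).lab) ∧
    ∀ π : InfProof, height (f π).lab ≤ height π.lab

/-- The set 𝒫₁ of ∞-proofs whose main fragment is cut-free, as a subtype. -/
abbrev P1 : Type := {π : InfProof // MemP 1 π.lab}

/-- An A-reducing mapping: a nonexpansive map ℛ : 𝒫₁ × 𝒫₁ → 𝒫₁ such that
ℛ(π′,π″) proves Γ ⇒ Δ whenever π′ proves Γ ⇒ Δ, A and π″ proves A, Γ ⇒ Δ. -/
def Reducing (A : Formula) (R : P1 → P1 → P1) : Prop :=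
  (∀ (n : ℕ) (p₁ p₂ q₁ q₂ : P1), Sim n p₁.1.lab q₁.1.lab → Sim n p₂.1.lab q₂.1.lab →
      Sim n (R p₁ p₂).1.lab (R q₁ q₂).1.lab) ∧
  ∀ (p₁ p₂ : P1) (Γ Δ : Multiset Formula),
    Proves p₁.1 (Γ, A ::ₘ Δ) → Proves p₂.1 (A ::ₘ Γ, Δ) → Proves (R p₁ p₂).1 (Γ, Δ)

/-- A mapping is root-preserving if it maps ∞-proofs to ∞-proofs of the same sequent. -/
def RootPres (f : InfProof → InfProof) : Prop :=
  ∀ (π : InfProof) (S : Sequent), Proves π S → Proves (f π) S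

/-- The uniform distance on mappings of ∞-proofs. -/
noncomputable def udist (U V : InfProof → InfProof) : ℝ :=
  ⨆ π : InfProof, pdist (U π) (V π)

/- The immediate subproof of `π` at child `i` (junk value `π` if there is none). -/
open Classical in
noncomputable def subtree (π : InfProof) (i : Bool) : InfProof :=
  if h : ∃ τ : InfProof, τ.lab = shift i π.lab then h.choose else π

/-- `IsFOp E F` : `F` is the operator ℱ (relative to the one-step cut-elimination map
`E` = ℰ*) defined by: on proofs with cut-free main fragment it commutes with the last
rule, applying `U` at right premises of (□) and fixing single-node proofs; on other
proofs it first applies `E`. -/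
def IsFOp (E : InfProof → InfProof) (F : (InfProof → InfProof) → InfProof → InfProof) : Prop :=
  ∀ (U : InfProof → InfProof) (π : InfProof),
    (MemP 1 π.lab → height π.lab = 0 → F U π = π) ∧
    (∀ (r : Rule) (s : Sequent), MemP 1 π.lab → π.lab [] = some (r, s) →
        r ≠ Rule.box → r ≠ Rule.cut → height π.lab ≠ 0 →
        (F U π).lab [] = some (r, s) ∧
        shift false (F U π).lab = (F U (subtree π false)).lab ∧
        (r = Rule.impL → shift true (F U π).lab = (F U (subtree π true)).lab)) ∧
    (∀ s : Sequent, MemP 1 π.lab → π.lab [] = some (Rule.box, s) →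
        (F U π).lab [] = some (Rule.box, s) ∧
        shift false (F U π).lab = (F U (subtree π false)).lab ∧
        shift true (F U π).lab = (U (subtree π true)).lab) ∧
    (¬ MemP 1 π.lab → F U π = F U (E π))

/-- Membership in 𝒩ₙ : a root-preserving nonexpansive map whose image lies in 𝒫ₙ. -/
def InN (n : ℕ) (U : InfProof → InfProof) : Prop :=
  Nonexpansive U ∧ RootPres U ∧ ∀ π : InfProof, MemP n (U π).lab

/-- The finitary sequent calculus Grz_Seq (with cut allowed iff the flag is `true`). -/
inductive GrzSeq : Bool → Sequent → Prop
  | ax (c : Bool) (Γ Δ : Multiset Formula) (A : Formula) :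
      GrzSeq c (A ::ₘ Γ, A ::ₘ Δ)
  | bot (c : Bool) (Γ Δ : Multiset Formula) :
      GrzSeq c (Formula.bot ::ₘ Γ, Δ)
  | impL (c : Bool) (Γ Δ : Multiset Formula) (A B : Formula) :
      GrzSeq c (B ::ₘ Γ, Δ) → GrzSeq c (Γ, A ::ₘ Δ) →
      GrzSeq c (Formula.imp A B ::ₘ Γ, Δ)
  | impR (c : Bool) (Γ Δ : Multiset Formula) (A B : Formula) :
      GrzSeq c (A ::ₘ Γ, B ::ₘ Δ) → GrzSeq c (Γ, Formula.imp A B ::ₘ Δ)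
  | refl (c : Bool) (Γ Δ : Multiset Formula) (B : Formula) :
      GrzSeq c (B ::ₘ Formula.box B ::ₘ Γ, Δ) → GrzSeq c (Formula.box B ::ₘ Γ, Δ)
  | grz (c : Bool) (Γ Δ : Multiset Formula) (A : Formula) (P : Multiset Formula) :
      GrzSeq c (Formula.box (Formula.imp A (Formula.box A)) ::ₘ boxed P, {A}) →
      GrzSeq c (Γ + boxed P, Formula.box A ::ₘ Δ)
  | cut (Γ Δ : Multiset Formula) (A : Formula) :
      GrzSeq true (Γ, A ::ₘ Δ) → GrzSeq true (A ::ₘ Γ, Δ) → GrzSeq true (Γ, Δ)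


/-!
Let `π` be a cut-free ∞-proof of `Γ ⇒ Δ`. We derive `Λ*, Γ ⇒ Δ` in Grz_Seq by induction on the
number of subformulas of `Γ ⇒ Δ` outside `Λ`, and inside it by well-founded induction along the
main fragment of `π` (which has no infinite branch, by the branch condition). The rules (→L),
(→R), (refl) are simulated directly. For (□) with principal formula `□A`: if `A ∈ Λ`, then
`□(A → □A) ∈ Λ*`, and (refl) followed by (→L) on it reduces the goal to the left premise;
if `A ∉ Λ`, the right premise `□Π ⇒ A` has fewer subformulas outside `Λ ∪ {A}`, so the outer
induction yields `(Λ ∪ {A})*, □Π ⇒ A`, which is exactly the premise of the rule `□_Grz`.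
-/

namespace Formula

def subformulas : Formula → Finset Formula
  | bot => {bot}
  | atom p => {atom p}
  | imp A B => insert (imp A B) (A.subformulas ∪ B.subformulas)
  | box A => insert (box A) A.subformulas

theorem mem_subformulas_self (A : Formula) : A ∈ A.subformulas := by
  cases A <;> simp [subformulas]

end Formula

open Formula

def subformulasOf (Γ : Multiset Formula) : Finset Formula := Γ.toFinset.biUnion subformulas

@[simp]
theorem subformulasOf_cons (A : Formula) (Γ : Multiset Formula) :
    subformulasOf (A ::ₘ Γ) = A.subformulas ∪ subformulasOf Γ := by
  simp [subformulasOf, Finset.biUnion_insert]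

@[simp]
theorem subformulasOf_add (Γ Γ' : Multiset Formula) :
    subformulasOf (Γ + Γ') = subformulasOf Γ ∪ subformulasOf Γ' := by
  simp [subformulasOf, Multiset.toFinset_add, Finset.union_biUnion]

@[simp]
theorem subformulasOf_singleton (A : Formula) : subformulasOf {A} = A.subformulas := by
  simp [subformulasOf]

theorem Inst.premise_subformulas_subset {r : Rule} {S : Sequent} {p q : Option Sequent}
    (h : Inst r S p q) (hr : r ≠ Rule.cut) :
    (∀ P ∈ p, subformulasOf (P.1 + P.2) ⊆ subformulasOf (S.1 + S.2)) ∧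
      ∀ P ∈ q, subformulasOf (P.1 + P.2) ⊆ subformulasOf (S.1 + S.2) := by
  cases h <;> simp [subformulas, Finset.subset_iff] at hr ⊢ <;> tauto

theorem Finset.card_sdiff_insert_lt {α : Type*} [DecidableEq α] {s t u : Finset α} {a : α}
    (hst : s ⊆ t) (hat : a ∈ t) (hau : a ∉ u) : (s \ insert a u).card < (t \ u).card :=
  calc (s \ insert a u).card ≤ ((t \ u).erase a).card :=
        Finset.card_le_card fun x hx => by
          simp only [Finset.mem_sdiff, Finset.mem_insert, not_or, Finset.mem_erase] at hx ⊢
          exact ⟨hx.2.1, hst hx.1, hx.2.2⟩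
    _ < (t \ u).card := Finset.card_erase_lt_of_mem (Finset.mem_sdiff.mpr ⟨hat, hau⟩)

theorem GrzSeq.weaken {c : Bool} {S : Sequent} (h : GrzSeq c S) (Γ' Δ' : Multiset Formula) :
    GrzSeq c (Γ' + S.1, Δ' + S.2) := by
  induction h with
  | ax c Γ Δ A => simpa [Multiset.add_cons] using GrzSeq.ax c (Γ' + Γ) (Δ' + Δ) A
  | bot c Γ Δ => simpa [Multiset.add_cons] using GrzSeq.bot c (Γ' + Γ) (Δ' + Δ)
  | impL c Γ Δ A B _ _ ih₁ ih₂ =>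
    simp only [Multiset.add_cons] at ih₁ ih₂ ⊢
    exact GrzSeq.impL c _ _ A B ih₁ ih₂
  | impR c Γ Δ A B _ ih =>
    simp only [Multiset.add_cons] at ih ⊢
    exact GrzSeq.impR c _ _ A B ih
  | refl c Γ Δ B _ ih =>
    simp only [Multiset.add_cons] at ih ⊢
    exact GrzSeq.refl c _ _ B ih
  | grz c Γ Δ A P h _ =>
    simpa [Multiset.add_cons, add_assoc] using GrzSeq.grz c (Γ' + Γ) (Δ' + Δ) A P h
  | cut Γ Δ A _ _ ih₁ ih₂ =>
    simp only [Multiset.add_cons] at ih₁ ih₂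
    exact GrzSeq.cut _ _ A ih₁ ih₂

theorem GrzSeq.box_of_mem {c : Bool} {Γ Δ : Multiset Formula} {A : Formula}
    (hA : box (imp A (box A)) ∈ Γ) (h : GrzSeq c (Γ, A ::ₘ Δ)) : GrzSeq c (Γ, box A ::ₘ Δ) := by
  obtain ⟨Γ', rfl⟩ := Multiset.exists_cons_of_mem hA
  refine GrzSeq.refl c _ _ _ (GrzSeq.impL c _ _ _ _ (GrzSeq.ax c _ _ _) ?_)
  simpa [Multiset.cons_swap] using h.weaken 0 {box A}

theorem boxed_add (P Q : Multiset Formula) : boxed (P + Q) = boxed P + boxed Q :=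
  Multiset.map_add _ _ _

/-- The multiset `Λ*` of the paper. -/
def grzStar (Λ : Finset Formula) : Multiset Formula :=
  Λ.val.map fun A => box (imp A (box A))

theorem grzStar_eq_boxed (Λ : Finset Formula) :
    grzStar Λ = boxed (Λ.val.map fun A => imp A (box A)) := by
  simp [grzStar, boxed, Multiset.map_map]

theorem grzStar_insert {Λ : Finset Formula} {A : Formula} (hA : A ∉ Λ) :
    grzStar (insert A Λ) = box (imp A (box A)) ::ₘ grzStar Λ := by
  simp [grzStar, Finset.insert_val_of_notMem hA]

theorem GrzSeq.grzStar_box {c : Bool} {Λ : Finset Formula} {Γ Δ P : Multiset Formula}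
    {A : Formula} (hmem : A ∈ Λ → GrzSeq c (grzStar Λ + (Γ + boxed P), A ::ₘ Δ))
    (hnotMem : A ∉ Λ → GrzSeq c (grzStar (insert A Λ) + boxed P, {A})) :
    GrzSeq c (grzStar Λ + (Γ + boxed P), box A ::ₘ Δ) := by
  by_cases hA : A ∈ Λ
  · exact GrzSeq.box_of_mem (by simp [grzStar, hA]) (hmem hA)
  · have h := hnotMem hA
    rw [grzStar_insert hA, grzStar_eq_boxed, Multiset.cons_add, ← boxed_add] at h
    rw [grzStar_eq_boxed, add_left_comm, ← boxed_add]
    exact GrzSeq.grz c Γ Δ A _ h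

theorem GrzSeq.of_inst {c : Bool} {r : Rule} {S : Sequent} {p q : Option Sequent}
    (Θ : Multiset Formula) (h : Inst r S p q) (hbox : r ≠ Rule.box) (hcut : r ≠ Rule.cut)
    (hp : ∀ P ∈ p, GrzSeq c (Θ + P.1, P.2)) (hq : ∀ P ∈ q, GrzSeq c (Θ + P.1, P.2)) :
    GrzSeq c (Θ + S.1, S.2) := by
  cases h <;>
    simp only [Option.mem_def, Option.some.injEq, forall_eq', Multiset.add_cons] at hp hq ⊢
  case ax => exact GrzSeq.ax c _ _ _
  case axBot => exact GrzSeq.bot c _ _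
  case impL => exact GrzSeq.impL c _ _ _ _ hp hq
  case impR => exact GrzSeq.impR c _ _ _ _ hp
  case refl => exact GrzSeq.refl c _ _ _ hp
  case box => exact absurd rfl hbox
  case cut => exact absurd rfl hcut

def MainPremise (l : Lab) (b a : List Bool) : Prop :=
  ∃ i : Bool, b = a ++ [i] ∧ (l b).isSome ∧ (i = true → (l a).map Prod.fst ≠ some Rule.box)

namespace InfProof

theorem isSome_of_prefix (π : InfProof) {a b : List Bool} (hab : a <+: b)
    (hb : (π.lab b).isSome) : (π.lab a).isSome := by
  obtain ⟨c, rfl⟩ := hab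
  induction c using List.reverseRecOn with
  | nil => simpa using hb
  | append_singleton c i ih =>
    refine ih (Option.ne_none_iff_isSome.mp fun hnone => ?_)
    rw [← List.append_assoc, π.nojunk _ i hnone] at hb
    exact Bool.false_ne_true hb

theorem wellFounded_mainPremise (π : InfProof) : WellFounded (MainPremise π.lab) := by
  refine ⟨fun a₀ => by_contra fun hacc => ?_⟩
  -- a descending chain from `a₀`, preceded by `a₀` itself, is an infinite branch that never
  -- passes through the right premise of (□) beyond `a₀`
  obtain ⟨g, hg0, hg⟩ := not_acc_iff_exists_descending_chain.mp hacc
  choose bit hbit hsome hnotBox using hg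
  let f : ℕ → Bool := fun m => if m < a₀.length then a₀.getD m false else bit (m - a₀.length)
  have hf : ∀ n, (List.range (a₀.length + n)).map f = g n := by
    intro n
    induction n with
    | zero =>
      rw [hg0]
      exact List.ext_getElem (by simp) fun m _ hm => by simp [f, hm]
    | succ n ih => rw [← add_assoc, List.range_succ, List.map_append, ih, hbit]; simp [f]
  have hgSome : ∀ n, (π.lab (g n)).isSome := fun n =>
    π.isSome_of_prefix (by rw [hbit]; exact List.prefix_append _ _) (hsome n)
  have hbranch : ∀ n, (π.lab ((List.range n).map f)).isSome := fun n =>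
    π.isSome_of_prefix
      (by rw [← hf n, add_comm, List.range_add, List.map_append]; exact List.prefix_append _ _)
      (hgSome n)
  obtain ⟨n, hn, hfn, hbox⟩ := π.branch f hbranch a₀.length
  obtain ⟨m, rfl⟩ := Nat.exists_eq_add_of_le hn
  rw [hf] at hbox
  exact hnotBox m (by simpa [f] using hfn) hbox

end InfProof

theorem InfProof.grzSeq_grzStar_of_noCut {π : InfProof} (hnc : NoCut π) :
    ∀ (k : ℕ) (Λ : Finset Formula) (a : List Bool) (r : Rule) (S : Sequent),
      π.lab a = some (r, S) → (subformulasOf (S.1 + S.2) \ Λ).card ≤ k →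
        GrzSeq false (grzStar Λ + S.1, S.2) := by
  intro k
  induction k using Nat.strong_induction_on with
  | _ k ihk =>
  intro Λ a
  induction a using π.wellFounded_mainPremise.induction with
  | _ a iha =>
  intro r S ha hk
  have hI := π.step a r S ha
  have hsub := hI.premise_subformulas_subset (hnc a r S ha)
  have ihPremise : ∀ (i : Bool) (P : Sequent), P ∈ (π.lab (a ++ [i])).map Prod.snd →
      (i = true → r ≠ Rule.box) → GrzSeq false (grzStar Λ + P.1, P.2) := by
    intro i P hP hi
    have hPS : subformulasOf (P.1 + P.2) ⊆ subformulasOf (S.1 + S.2) := by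
      cases i
      exacts [hsub.1 _ hP, hsub.2 _ hP]
    obtain ⟨⟨r', _⟩, hlab, rfl⟩ := Option.map_eq_some_iff.mp hP
    refine iha _ ⟨i, rfl, by simp [hlab], fun hi' => by simpa [ha] using hi hi'⟩ r' _ hlab
      (le_trans (Finset.card_le_card (Finset.sdiff_subset_sdiff hPS subset_rfl)) hk)
  by_cases hbox : r = Rule.box
  · subst hbox
    generalize hp : (π.lab (a ++ [false])).map Prod.snd = p at hI
    generalize hq : (π.lab (a ++ [true])).map Prod.snd = q at hI
    cases hI with
    | box Γ Δ A P =>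
      refine GrzSeq.grzStar_box (fun _ => ihPremise false _ hp (by simp)) fun hA => ?_
      obtain ⟨⟨r', _⟩, hlab, hP⟩ := Option.map_eq_some_iff.mp hq
      cases hP
      refine ihk _ (lt_of_lt_of_le ?_ hk) _ _ r' _ hlab le_rfl
      exact Finset.card_sdiff_insert_lt (hsub.2 _ hq)
        (by simp [subformulas, mem_subformulas_self]) hA
  · exact GrzSeq.of_inst _ hI hbox (hnc a r S ha) (ihPremise false · · (by simp))
      (ihPremise true · · fun _ => hbox)

/-- if Γ ⇒ Δ is provable in Grz∞, then Λ*, Γ ⇒ Δ is provable in Grz_Seq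
for every finite set Λ of formulas; in particular Γ ⇒ Δ is provable in Grz_Seq. -/
theorem inf_to_seq (Γ Δ : Multiset Formula)
    (h : ∃ π : InfProof, NoCut π ∧ Proves π (Γ, Δ)) :
    (∀ Λ : Finset Formula,
      GrzSeq false
        (Multiset.map (fun A => Formula.box (Formula.imp A (Formula.box A))) Λ.val + Γ, Δ)) ∧
    GrzSeq false (Γ, Δ) := by
  obtain ⟨π, hnc, r, hroot⟩ := h
  have hstar : ∀ Λ, GrzSeq false (grzStar Λ + Γ, Δ) := fun Λ =>
    π.grzSeq_grzStar_of_noCut hnc _ Λ [] r _ hroot le_rfl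
  exact ⟨hstar, by simpa [grzStar] using hstar ∅⟩
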